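/- Let 1/2 < p < 1 and define, for real x, y ≥ 0 and z < 0: U(x,y,z) = (1 − 𝔠_p^p)·(−z)^p + p·(−z)^{p−1}·(x−z)·∫_1^∞ r^{p−1}/(r+1) dr if y < −z, and U(x,y,z) = y^p − 𝔠_p^p·(−z)^p + p·(−z)^{p−1}·(x−z)·∫_{−y/z}^∞ r^{p−1}/(r+1) dr if y ≥ −z. Then for all z < 0, all x, y with z < x < y, and all d ≥ 0, one has U(x+d, max(x+d, y), z) ≤ U(x,y,z) + d·p·(−z)^{p−1}·∫_{max(−y/z, 1)}^∞ r^{p−1}/(r+1) dr. -/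

import Mathlib

/-!
Write `a = -z`, `F(s) = ∫_s^∞ r^(p-1)/(r+1) dr` and `m = max y a`. Both branches of `U` read
`U(x,y,z) = m^p - 𝔠_p^p a^p + p a^(p-1) (x + a) F(m/a)`, and the jump can only raise `m` to
`T = x + d`. The jump inequality thus becomes `T^p - m^p ≤ p a^(p-1) (T + a) (F(m/a) - F(T/a))`
for `m ≤ T`, which after scaling by `a` is
`t^p - s^p = p ∫_s^t r^(p-1) dr ≤ p (t+1) ∫_s^t r^(p-1)/(r+1) dr`.
-/

open MeasureTheory Set

/-- The special function `U(x,y,z)` used in the proof of `‖M‖_p ≤ 𝔠_p‖M⁻‖_p` for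
`1/2 < p < 1`, with `𝔠_p^p = 1 + ∫_1^∞ s^(p−1)/(s+1) ds`. -/
noncomputable def specialV (p : ℝ) (x y z : ℝ) : ℝ :=
  if y < -z then
    (1 - (1 + ∫ s in Set.Ioi (1 : ℝ), s ^ (p - 1) / (s + 1))) * (-z) ^ p
      + p * (-z) ^ (p - 1) * (x - z) * ∫ r in Set.Ioi (1 : ℝ), r ^ (p - 1) / (r + 1)
  else
    y ^ p - (1 + ∫ s in Set.Ioi (1 : ℝ), s ^ (p - 1) / (s + 1)) * (-z) ^ p
      + p * (-z) ^ (p - 1) * (x - z) * ∫ r in Set.Ioi (-y / z), r ^ (p - 1) / (r + 1)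

noncomputable def tailIntegral (p s : ℝ) : ℝ := ∫ r in Ioi s, r ^ (p - 1) / (r + 1)

lemma integrableOn_rpow_div_add_one_Ioi {p a : ℝ} (hp1 : p < 1) (ha : 0 < a) :
    IntegrableOn (fun r : ℝ => r ^ (p - 1) / (r + 1)) (Ioi a) := by
  refine (integrableOn_Ioi_rpow_of_lt (by linarith : p - 2 < -1) ha).mono' ?_ ?_
  · exact (by fun_prop : Measurable fun r : ℝ => r ^ (p - 1) / (r + 1)).aestronglyMeasurable
  · filter_upwards [ae_restrict_mem measurableSet_Ioi] with r hr
    have hr0 : 0 < r := ha.trans hr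
    rw [Real.norm_eq_abs, abs_of_nonneg (div_nonneg (Real.rpow_nonneg hr0.le _) (by linarith)),
      show p - 2 = p - 1 - 1 by ring, Real.rpow_sub_one hr0.ne' (p - 1)]
    exact div_le_div_of_nonneg_left (Real.rpow_nonneg hr0.le _) hr0 (by linarith)

lemma rpow_sub_rpow_le_mul_tailIntegral_sub {p s t : ℝ} (hp : 0 < p) (hp1 : p < 1)
    (hs : 0 < s) (hst : s ≤ t) :
    t ^ p - s ^ p ≤ p * (t + 1) * (tailIntegral p s - tailIntegral p t) := by
  have hrpow : ContinuousOn (fun r : ℝ => r ^ (p - 1)) (Icc s t) :=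
    continuousOn_id.rpow_const fun r hr => Or.inl (hs.trans_le hr.1).ne'
  have ht1 : t + 1 ≠ 0 := by linarith
  have hf := integrableOn_rpow_div_add_one_Ioi hp1 hs
  calc t ^ p - s ^ p = p * (t + 1) * ∫ r in s..t, r ^ (p - 1) / (t + 1) := by
        rw [intervalIntegral.integral_div, integral_rpow (Or.inl (by linarith)), sub_add_cancel]
        field_simp
    _ ≤ p * (t + 1) * ∫ r in s..t, r ^ (p - 1) / (r + 1) := by
        refine mul_le_mul_of_nonneg_left ?_ (mul_nonneg hp.le (by linarith))
        refine intervalIntegral.integral_mono_on hst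
          ((hrpow.intervalIntegrable_of_Icc hst).div_const _)
          ((intervalIntegrable_iff_integrableOn_Ioc_of_le hst).2 (hf.mono_set Ioc_subset_Ioi_self))
          fun r hr => ?_
        have hr0 : 0 < r := hs.trans_le hr.1
        exact div_le_div_of_nonneg_left (Real.rpow_nonneg hr0.le _) (by linarith)
          (by linarith [hr.2])
    _ = p * (t + 1) * (tailIntegral p s - tailIntegral p t) := by
        rw [tailIntegral, tailIntegral, intervalIntegral.integral_Ioi_sub_Ioi hf hst]

lemma rpow_sub_rpow_le_mul_tailIntegral_sub_div {p a s t : ℝ} (hp : 0 < p) (hp1 : p < 1)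
    (ha : 0 < a) (hs : 0 < s) (hst : s ≤ t) :
    t ^ p - s ^ p ≤
      p * a ^ (p - 1) * (t + a) * (tailIntegral p (s / a) - tailIntegral p (t / a)) := by
  have ht : 0 < t := hs.trans_le hst
  have key := mul_le_mul_of_nonneg_left (rpow_sub_rpow_le_mul_tailIntegral_sub hp hp1
    (div_pos hs ha) (div_le_div_of_nonneg_right hst ha.le)) (Real.rpow_nonneg ha.le p)
  have hap0 : a ^ p ≠ 0 := (Real.rpow_pos_of_pos ha p).ne'
  rw [Real.div_rpow ht.le ha.le, Real.div_rpow hs.le ha.le, mul_sub, mul_div_cancel₀ _ hap0,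
    mul_div_cancel₀ _ hap0] at key
  refine key.trans_eq ?_
  rw [Real.rpow_sub_one ha.ne', div_add_one ha.ne']
  field_simp

lemma specialV_eq (p x y : ℝ) {z : ℝ} (hz : z < 0) :
    specialV p x y z = max y (-z) ^ p - (1 + tailIntegral p 1) * (-z) ^ p
      + p * (-z) ^ (p - 1) * (x - z) * tailIntegral p (max y (-z) / -z) := by
  unfold specialV tailIntegral
  split_ifs with hy
  · rw [max_eq_right hy.le, div_self (by linarith)]
    ring
  · rw [max_eq_left (not_lt.1 hy), div_neg, neg_div]

theorem specialV_jump_general (p : ℝ) (hp : 1 / 2 < p) (hp1 : p < 1)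
    (z x y : ℝ) (hz : z < 0)
    (d : ℝ) :
    specialV p (x + d) (max (x + d) y) z
      ≤ specialV p x y z
        + d * (p * (-z) ^ (p - 1)
            * ∫ r in Set.Ioi (max (-y / z) 1), r ^ (p - 1) / (r + 1)) := by
  have ha : 0 < -z := neg_pos.2 hz
  have hmax : max (-y / z) 1 = max y (-z) / -z := by
    rw [← max_div_div_right ha.le, div_self ha.ne', div_neg, neg_div]
  change _ ≤ _ + d * (p * (-z) ^ (p - 1) * tailIntegral p (max (-y / z) 1))
  rw [hmax, specialV_eq p _ _ hz, specialV_eq p _ _ hz, max_assoc]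
  obtain hle | hlt := le_or_gt (x + d) (max y (-z))
  · rw [max_eq_right hle]
    linarith
  · rw [max_eq_left hlt.le]
    linarith [rpow_sub_rpow_le_mul_tailIntegral_sub_div (by linarith) hp1 ha
      (lt_max_of_lt_right ha) hlt.le]

/-- Jump condition: for `1/2 < p < 1`, all `z < 0`, `z < x < y` and `d ≥ 0`,
`U(x+d, max(x+d,y), z) ≤ U(x,y,z) + d·U_x(x,y,z)`, where
`U_x(x,y,z) = p(−z)^(p−1) ∫_{max(−y/z,1)}^∞ r^(p−1)/(r+1) dr`. -/
theorem specialV_jump (p : ℝ) (hp : 1 / 2 < p) (hp1 : p < 1)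
    (z x y : ℝ) (hz : z < 0) (hzx : z < x) (hxy : x < y)
    (d : ℝ) (hd : 0 ≤ d) :
    specialV p (x + d) (max (x + d) y) z
      ≤ specialV p x y z
        + d * (p * (-z) ^ (p - 1)
            * ∫ r in Set.Ioi (max (-y / z) 1), r ^ (p - 1) / (r + 1)) :=
  specialV_jump_general p hp hp1 z x y hz d
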